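/- arXiv:1606.09632 — 5 statements merged into one kernel-verified Lean document; each statement's English description precedes it below -/
import Mathlib

section
/- For any pair of matrices A1, A2 with nonnegative real entries of size n × d, and any pair of sign vectors v1, v2 ∈ {-1,1}^d, the squared Frobenius norm of A1·diag(v1 - v2) is at most 4 times the squared Frobenius norm of A1·diag(v1) - A2·diag(v2). -/
/-! Entrywise: where the signs agree the left-hand entry vanishes, and where they differ it is
`±2a` while the right-hand entry is `±(a + b)`, so nonnegativity gives `a ≤ a + b`. -/

theorem sq_mul_sub_le_four_mul_sq_mul_sub {R : Type*} [CommRing R] [LinearOrder R]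
    [IsStrictOrderedRing R] {a b s t : R} (ha : 0 ≤ a) (hb : 0 ≤ b)
    (hs : s = -1 ∨ s = 1) (ht : t = -1 ∨ t = 1) :
    (a * (s - t)) ^ 2 ≤ 4 * (a * s - b * t) ^ 2 := by
  rcases hs with rfl | rfl <;> rcases ht with rfl | rfl <;> nlinarith [mul_nonneg ha hb]

theorem stmt_1 (n d : ℕ) (A1 A2 : Matrix (Fin n) (Fin d) ℝ)
    (hA1 : ∀ i j, 0 ≤ A1 i j) (hA2 : ∀ i j, 0 ≤ A2 i j)
    (v1 v2 : Fin d → ℝ)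
    (hv1 : ∀ j, v1 j = -1 ∨ v1 j = 1) (hv2 : ∀ j, v2 j = -1 ∨ v2 j = 1) :
    ∑ i, ∑ j, ((A1 * Matrix.diagonal (v1 - v2)) i j) ^ 2 ≤
      4 * ∑ i, ∑ j, ((A1 * Matrix.diagonal v1 - A2 * Matrix.diagonal v2) i j) ^ 2 := by
  simp only [Finset.mul_sum, Matrix.mul_diagonal, Matrix.sub_apply, Pi.sub_apply]
  gcongr with i _ j _
  exact sq_mul_sub_le_four_mul_sq_mul_sub (hA1 i j) (hA2 i j) (hv1 j) (hv2 j)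
end

section
/- Let n ≥ 16 and let v ∈ [0,1]^n be a vector with nonincreasing entries v_1 ≥ v_2 ≥ ... ≥ v_n ≥ 0. Then there exists an integer α with ⌈(1/2)‖v‖₂²⌉ ≤ α ≤ n such that the sum of the first α entries of v satisfies ∑_{i=1}^{α} v_i ≥ √(α·‖v‖₂² / (2·log n)). -/
/-!
Put `S = ‖v‖²`, `L = 2 log n` and `α₀ = ⌈S/2⌉`, and suppose every prefix sum `P_α` with
`α₀ ≤ α ≤ n` is below `√(αS/L)`. Monotonicity gives `α v_α ≤ P_α`, hence `v_α² < S/(Lα)` for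
`α ≥ α₀`, and the harmonic bound makes the tail `∑_{α > α₀} v_α²` at most `(S/L) log n = S/2`.
So the first `α₀` entries carry more than `S/2` of the mass. For `α₀ = 1` this contradicts
`v_1² < S/L ≤ S/4`; for `α₀ ≥ 2` it contradicts `∑_{i ≤ α₀} v_i² ≤ P_{α₀} < √(α₀S/L) ≤ S/2`,
where the last step uses `α₀ ≤ S/2 + 1 ≤ S` and `L ≥ 4`.
-/

open Finset Real

lemma sum_Ico_inv_succ_le_log {m : ℕ} (hm : 1 ≤ m) (n : ℕ) :
    ∑ i ∈ Ico m n, ((i : ℝ) + 1)⁻¹ ≤ log n := by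
  rcases Nat.eq_zero_or_pos n with rfl | hn
  · simp
  calc ∑ i ∈ Ico m n, ((i : ℝ) + 1)⁻¹ ≤ ∑ i ∈ Ico 1 n, ((i : ℝ) + 1)⁻¹ :=
        sum_le_sum_of_subset_of_nonneg (Ico_subset_Ico_left hm) fun _ _ _ => by positivity
    _ = harmonic n - 1 := by
        rw [harmonic, ← sum_range_add_sum_Ico _ hn]
        push_cast
        simp
    _ ≤ log n := by linarith [harmonic_le_one_add_log n]

lemma sum_Ico_le_mul_log {f : ℕ → ℝ} {c : ℝ} {m : ℕ} (hm : 1 ≤ m) (n : ℕ) (hc : 0 ≤ c)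
    (hf : ∀ i ∈ Ico m n, f i ≤ c / (i + 1)) : ∑ i ∈ Ico m n, f i ≤ c * log n := calc
  ∑ i ∈ Ico m n, f i ≤ ∑ i ∈ Ico m n, c * ((i : ℝ) + 1)⁻¹ := sum_le_sum hf
  _ = c * ∑ i ∈ Ico m n, ((i : ℝ) + 1)⁻¹ := (mul_sum ..).symm
  _ ≤ c * log n := by gcongr; exact sum_Ico_inv_succ_le_log hm n

lemma sum_sq_le_sum {ι : Type*} {s : Finset ι} {f : ι → ℝ} (h0 : ∀ i ∈ s, 0 ≤ f i)
    (h1 : ∀ i ∈ s, f i ≤ 1) : ∑ i ∈ s, f i ^ 2 ≤ ∑ i ∈ s, f i :=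
  sum_le_sum fun i hi => by nlinarith [h0 i hi, h1 i hi]

lemma succ_mul_le_sum_range {R : Type*} [Semiring R] [PartialOrder R] [IsOrderedAddMonoid R]
    {w : ℕ → R} {n i : ℕ} (hw : AntitoneOn w (Set.Iio n)) (hi : i < n) :
    (i + 1) * w i ≤ ∑ j ∈ range (i + 1), w j := by
  have := card_nsmul_le_sum (range (i + 1)) w (w i) fun j hj =>
    hw (Set.mem_Iio.2 (by rw [mem_range] at hj; omega)) (Set.mem_Iio.2 hi) (by rw [mem_range] at hj; omega)
  simpa [nsmul_eq_mul] using this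

lemma sq_lt_div_of_sum_range_lt_sqrt {w : ℕ → ℝ} {n i : ℕ} {c : ℝ}
    (hw : AntitoneOn w (Set.Iio n)) (hi : i < n) (hwi : 0 ≤ w i)
    (h : ∑ j ∈ range (i + 1), w j < √((i + 1) * c)) : w i ^ 2 < c / (i + 1) := by
  have := (lt_sqrt (by positivity)).1 ((succ_mul_le_sum_range hw hi).trans_lt h)
  rw [lt_div_iff₀ (by positivity)]
  nlinarith

lemma sqrt_ceil_half_mul_div_le_half {S L : ℝ} (hL : 4 ≤ L) (h : 1 < ⌈(1 / 2 : ℝ) * S⌉₊) :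
    √((⌈(1 / 2 : ℝ) * S⌉₊ * S) / L) ≤ S / 2 := by
  have hlb : (1 : ℝ) < 1 / 2 * S := by exact_mod_cast Nat.lt_ceil.1 h
  have hub : (⌈(1 / 2 : ℝ) * S⌉₊ : ℝ) < 1 / 2 * S + 1 := Nat.ceil_lt_add_one (by linarith)
  rw [sqrt_le_iff, div_le_iff₀ (by linarith)]
  refine ⟨by linarith, ?_⟩
  nlinarith [mul_le_mul_of_nonneg_left hL (sq_nonneg S)]

lemma Fin.sum_filter_val_lt {M : Type*} [AddCommMonoid M] {n α : ℕ} (hα : α ≤ n) (f : ℕ → M) :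
    ∑ i ∈ univ.filter (fun i : Fin n => (i : ℕ) < α), f i = ∑ i ∈ range α, f i := by
  rw [sum_filter, Fin.sum_univ_eq_sum_range (fun i => if i < α then f i else 0), ← sum_filter]
  congr 1
  ext i
  simp only [mem_filter, mem_range]
  omega

theorem exists_sqrt_le_sum_range {n : ℕ} (hlog : 2 ≤ log n) {w : ℕ → ℝ}
    (hw0 : ∀ i < n, 0 ≤ w i) (hw1 : ∀ i < n, w i ≤ 1) (hanti : AntitoneOn w (Set.Iio n)) :
    ∃ α : ℕ, ⌈(1 / 2 : ℝ) * ∑ i ∈ range n, w i ^ 2⌉₊ ≤ α ∧ α ≤ n ∧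
      √((α * ∑ i ∈ range n, w i ^ 2) / (2 * log n)) ≤ ∑ i ∈ range α, w i := by
  set S := ∑ i ∈ range n, w i ^ 2
  set L := 2 * log n
  set α₀ := ⌈(1 / 2 : ℝ) * S⌉₊
  have hL : 4 ≤ L := by linarith
  have hw0' : ∀ i ∈ range n, 0 ≤ w i := fun i hi => hw0 i (mem_range.1 hi)
  have hw1' : ∀ i ∈ range n, w i ≤ 1 := fun i hi => hw1 i (mem_range.1 hi)
  by_contra! hcon
  have hα₀n : α₀ ≤ n := Nat.ceil_le.2 <| by
    have := (sum_sq_le_sum hw0' hw1').trans (sum_le_card_nsmul _ _ _ hw1')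
    simp only [card_range, nsmul_eq_mul, mul_one] at this
    linarith
  have hS : 0 < S := by
    refine (sum_nonneg fun i _ => sq_nonneg (w i)).lt_of_ne' fun hS0 => ?_
    have := hcon n hα₀n le_rfl
    rw [show S = 0 from hS0, mul_zero, zero_div, sqrt_zero] at this
    exact this.not_ge (sum_nonneg hw0')
  have hα₀ : 1 ≤ α₀ := Nat.one_le_iff_ne_zero.2 (Nat.ceil_pos.2 (by positivity)).ne'
  have hsmall : ∀ i < n, α₀ ≤ i + 1 → w i ^ 2 < S / L / (i + 1) := fun i hi hα =>
    sq_lt_div_of_sum_range_lt_sqrt hanti hi (hw0 i hi) <| by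
      rw [← mul_div_assoc]; exact_mod_cast hcon (i + 1) hα hi
  have tail : ∑ i ∈ Ico α₀ n, w i ^ 2 ≤ S / 2 := by
    convert sum_Ico_le_mul_log hα₀ n (by positivity) fun i hi =>
      (hsmall i (mem_Ico.1 hi).2 (by linarith [(mem_Ico.1 hi).1])).le using 1
    simp only [L]; field_simp
  have hsplit : ∑ i ∈ range α₀, w i ^ 2 + ∑ i ∈ Ico α₀ n, w i ^ 2 = S :=
    sum_range_add_sum_Ico _ hα₀n
  rcases hα₀.eq_or_lt with hα₀_eq | hα₀_gt
  · have head : ∑ i ∈ range α₀, w i ^ 2 < S / L := by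
      simpa [← hα₀_eq] using hsmall 0 (by omega) (by omega)
    have : S / L ≤ S / 4 := div_le_div_of_nonneg_left hS.le (by norm_num) hL
    linarith
  · have head : ∑ i ∈ range α₀, w i ^ 2 < √((α₀ * S) / L) :=
      (sum_sq_le_sum (fun i hi => hw0' i (range_subset_range.2 hα₀n hi))
        (fun i hi => hw1' i (range_subset_range.2 hα₀n hi))).trans_lt (hcon α₀ le_rfl hα₀n)
    linarith [sqrt_ceil_half_mul_div_le_half hL hα₀_gt]

theorem stmt_2 (n : ℕ) (hn : 16 ≤ n) (v : Fin n → ℝ)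
    (hv01 : ∀ i, 0 ≤ v i ∧ v i ≤ 1)
    (hmono : ∀ i j : Fin n, i ≤ j → v j ≤ v i) :
    ∃ α : ℕ, ⌈(1 / 2 : ℝ) * ∑ i, (v i) ^ 2⌉₊ ≤ α ∧ α ≤ n ∧
      Real.sqrt ((α * ∑ i, (v i) ^ 2) / (2 * Real.log n)) ≤
        ∑ i ∈ Finset.univ.filter (fun i : Fin n => (i : ℕ) < α), v i := by
  have hlog : 2 ≤ log n := calc
    (2 : ℝ) ≤ 4 * log 2 := by linarith [log_two_gt_d9]
    _ = log 16 := by rw [show (16 : ℝ) = 2 ^ 4 by norm_num, log_pow]; norm_num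
    _ ≤ log n := log_le_log (by norm_num) (by exact_mod_cast hn)
  set w : ℕ → ℝ := fun i => if h : i < n then v ⟨i, h⟩ else 0
  have hw : ∀ i : Fin n, w i = v i := fun i => dif_pos i.isLt
  have hS : ∑ i, v i ^ 2 = ∑ i ∈ range n, w i ^ 2 := by
    simp only [← hw]
    exact Fin.sum_univ_eq_sum_range (fun i => w i ^ 2) n
  obtain ⟨α, hα₀, hαn, hα⟩ := exists_sqrt_le_sum_range hlog (w := w)
    (fun i hi => (hv01 ⟨i, hi⟩).1.trans_eq (hw ⟨i, hi⟩).symm)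
    (fun i hi => (hw ⟨i, hi⟩).trans_le (hv01 ⟨i, hi⟩).2)
    (fun i hi j hj hij => by simpa only [← hw] using hmono ⟨i, hi⟩ ⟨j, hj⟩ hij)
  have hP : ∑ i ∈ univ.filter (fun i : Fin n => (i : ℕ) < α), v i = ∑ i ∈ range α, w i := by
    simp only [← hw]
    exact Fin.sum_filter_val_lt hαn w
  refine ⟨α, hS ▸ hα₀, hαn, ?_⟩
  rwa [hS, hP]
end

section
/- Let r ∈ ℝ^n be a vector with nonincreasing nonnegative entries and let u ∈ ℝ^n be any vector. Let r̃ be the vector obtained by permuting the entries of r so that they are ordered the same way as the entries of u (i.e., r̃ is the rearrangement of r that is similarly ordered to u). Then for any ρ > 0, ‖r̃ - r‖₂ ≤ 2·‖ρ·u - r‖₂. -/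
/-! Since `r̃` is a rearrangement of `r`, it has the same Euclidean norm, and by the rearrangement
inequality its inner product with `ρ u` is at least that of `r`; hence `r̃` is at least as close to
`ρ u` as `r` is, and the triangle inequality through `ρ u` gives the factor `2`. -/

open Finset

variable {ι : Type*} [Fintype ι]

lemma sum_sub_sq_eq (g f : ι → ℝ) :
    ∑ i, (g i - f i) ^ 2 = ∑ i, g i ^ 2 - 2 * ∑ i, f i * g i + ∑ i, f i ^ 2 := by
  rw [mul_sum, ← sum_sub_distrib, ← sum_add_distrib]
  exact sum_congr rfl fun i _ => by ring

lemma Monovary.sum_sub_comp_perm_sq_le {f g : ι → ℝ} (σ : Equiv.Perm ι)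
    (hfg : Monovary (f ∘ σ) g) :
    ∑ i, (g i - f (σ i)) ^ 2 ≤ ∑ i, (g i - f i) ^ 2 := by
  have hsq : ∑ i, f (σ i) ^ 2 = ∑ i, f i ^ 2 := Equiv.sum_comp σ fun i => f i ^ 2
  have hmul : ∑ i, f i * g i ≤ ∑ i, f (σ i) * g i := by
    simpa using hfg.sum_comp_perm_mul_le_sum_mul (σ := σ⁻¹)
  rw [sum_sub_sq_eq g f, sum_sub_sq_eq g fun i => f (σ i)]
  linarith

lemma sqrt_sum_sub_sq_eq_dist (x y : ι → ℝ) :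
    √(∑ i, (x i - y i) ^ 2) = dist (WithLp.toLp 2 x : EuclideanSpace ℝ ι) (WithLp.toLp 2 y) := by
  simp [EuclideanSpace.dist_eq, Real.dist_eq, sq_abs]

lemma Monovary.dist_comp_perm_le_two_mul {f g : ι → ℝ} (σ : Equiv.Perm ι)
    (hfg : Monovary (f ∘ σ) g) :
    √(∑ i, (f (σ i) - f i) ^ 2) ≤ 2 * √(∑ i, (g i - f i) ^ 2) := by
  have hcloser : √(∑ i, (g i - f (σ i)) ^ 2) ≤ √(∑ i, (g i - f i) ^ 2) :=
    Real.sqrt_le_sqrt (hfg.sum_sub_comp_perm_sq_le σ)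
  have htriangle := dist_triangle_left (WithLp.toLp 2 (f ∘ σ) : EuclideanSpace ℝ ι)
    (WithLp.toLp 2 f) (WithLp.toLp 2 g)
  simp only [← sqrt_sum_sub_sq_eq_dist, Function.comp_apply] at htriangle
  linarith

theorem stmt_3_general (n : ℕ) (r rt u : Fin n → ℝ)
    (σ : Equiv.Perm (Fin n)) (hperm : ∀ i, rt i = r (σ i))
    (hconsist : ∀ i j : Fin n, u j < u i → rt j ≤ rt i)
    (ρ : ℝ) (hρ : 0 < ρ) :
    Real.sqrt (∑ i, (rt i - r i) ^ 2) ≤ 2 * Real.sqrt (∑ i, (ρ * u i - r i) ^ 2) := by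
  have hrt : rt = r ∘ σ := funext hperm
  subst hrt
  have hmono : Monovary (r ∘ σ) (fun i => ρ * u i) := fun i j h =>
    hconsist j i (lt_of_mul_lt_mul_left h hρ.le)
  exact hmono.dist_comp_perm_le_two_mul σ

theorem stmt_3 (n : ℕ) (r rt u : Fin n → ℝ)
    (hr0 : ∀ i, 0 ≤ r i)
    (hrmono : ∀ i j : Fin n, i ≤ j → r j ≤ r i)
    (σ : Equiv.Perm (Fin n)) (hperm : ∀ i, rt i = r (σ i))
    (hconsist : ∀ i j : Fin n, u j < u i → rt j ≤ rt i)
    (ρ : ℝ) (hρ : 0 < ρ) :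
    Real.sqrt (∑ i, (rt i - r i) ^ 2) ≤ 2 * Real.sqrt (∑ i, (ρ * u i - r i) ^ 2) :=
  stmt_3_general n r rt u σ hperm hconsist ρ hρ
end

section
/- Every matrix of the form Q = q̃·(1-h)ᵀ + (1/2)·1·hᵀ, where q̃ ∈ [1/2,1]^n and h ∈ [0,1]^d, has all entries in [1/2, 1] and is bi-monotone up to permutations: there exist permutations π of rows and σ of columns such that after applying them, each row and each column of Q is nonincreasing. In particular the intermediate model class C_Int is contained in the permutation-based class C_Perm. -/
/-! Each entry `q i * (1 - h j) + 1/2 * h j` is a convex combination of `q i` and `1/2`, hence lies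
in `[1/2, 1]`. It is nondecreasing in `q i`, and nonincreasing in `h j` because `1/2 ≤ q i`; so
listing the rows by decreasing `q` and the columns by increasing `h` makes the matrix bi-monotone. -/

open Set

lemma mul_one_sub_add_mul_mem_Icc {a b q c t : ℝ} (hq : q ∈ Icc a b) (hc : c ∈ Icc a b)
    (ht : t ∈ Icc 0 1) : q * (1 - t) + c * t ∈ Icc a b := by
  simpa [smul_eq_mul, mul_comm] using
    convex_Icc a b hq hc (sub_nonneg.2 ht.2) ht.1 (sub_add_cancel 1 t)

lemma mul_one_sub_add_mul_le_of_le_left {q q' c t : ℝ} (hqq' : q ≤ q') (ht : t ≤ 1) :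
    q * (1 - t) + c * t ≤ q' * (1 - t) + c * t := by
  gcongr

lemma mul_one_sub_add_mul_le_of_le_right {q c t t' : ℝ} (hcq : c ≤ q) (htt' : t ≤ t') :
    q * (1 - t') + c * t' ≤ q * (1 - t) + c * t := by
  nlinarith

lemma exists_perm_le_imp_le {α : Type*} [LinearOrder α] {n : ℕ} (f : Fin n → α) :
    ∃ σ : Equiv.Perm (Fin n), ∀ i j, σ i ≤ σ j → f i ≤ f j := by
  refine ⟨(Tuple.sort f)⁻¹, fun i j hij => ?_⟩
  simpa using Tuple.monotone_sort f hij

theorem stmt_11 (n d : ℕ) (q : Fin n → ℝ) (h : Fin d → ℝ)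
    (hq : ∀ i, (1 / 2 : ℝ) ≤ q i ∧ q i ≤ 1)
    (hh : ∀ j, (0 : ℝ) ≤ h j ∧ h j ≤ 1)
    (Q : Matrix (Fin n) (Fin d) ℝ)
    (hQ : ∀ i j, Q i j = q i * (1 - h j) + (1 / 2 : ℝ) * h j) :
    (∀ i j, (1 / 2 : ℝ) ≤ Q i j ∧ Q i j ≤ 1) ∧
      ∃ (π : Equiv.Perm (Fin n)) (σ : Equiv.Perm (Fin d)),
        ∀ i i' j j', π i ≤ π i' → σ j ≤ σ j' → Q i' j' ≤ Q i j := by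
  refine ⟨fun i j => hQ i j ▸ mul_one_sub_add_mul_mem_Icc (hq i) (by norm_num) (hh j), ?_⟩
  obtain ⟨π, hπ⟩ := exists_perm_le_imp_le (OrderDual.toDual ∘ q)
  obtain ⟨σ, hσ⟩ := exists_perm_le_imp_le h
  refine ⟨π, σ, fun i i' j j' hii' hjj' => ?_⟩
  calc Q i' j' ≤ q i * (1 - h j') + 1 / 2 * h j' :=
        hQ i' j' ▸ mul_one_sub_add_mul_le_of_le_left (hπ i i' hii') (hh j').2
    _ ≤ Q i j := hQ i j ▸ mul_one_sub_add_mul_le_of_le_right (hq i).1 (hσ j j' hjj')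
end

section
/- For any vectors u, r ∈ ℝ^n with ‖r‖₂ = ρ > 0, if the sign-selection condition ∑_i u_i²·1[u_i > 0] ≥ ∑_i u_i²·1[u_i < 0] holds and all entries of r are nonnegative, then ‖u + r/ρ‖₂² ≥ (1/2)‖u‖₂². -/
/-! With `s = r / ρ`, a nonnegative unit vector, `‖u + s‖² = ‖u‖² + 2⟪u, s⟫ + 1`. Only the negative
part `u⁻` of `u` can make `⟪u, s⟫` negative, and by Cauchy–Schwarz `⟪u, s⟫ ≥ -‖u⁻‖`. The sign
condition says `‖u⁻‖² ≤ ‖u‖² / 2`, so `‖u + s‖² ≥ ‖u‖² / 2 + (√(‖u‖² / 2) - 1)² ≥ ‖u‖² / 2`. -/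

open Finset

variable {ι : Type*} [Fintype ι]

lemma sum_sq_mul_ite_neg_add_sum_sq_mul_ite_pos (u : ι → ℝ) :
    ∑ i, u i ^ 2 * (if u i < 0 then (1 : ℝ) else 0) +
      ∑ i, u i ^ 2 * (if 0 < u i then (1 : ℝ) else 0) = ∑ i, u i ^ 2 := by
  rw [← sum_add_distrib]
  refine sum_congr rfl fun i _ => ?_
  rcases lt_trichotomy (u i) 0 with h | h | h
  · simp [h, h.not_gt]
  · simp [h]
  · simp [h, h.not_gt]

lemma sum_negPart_sq (u : ι → ℝ) :
    ∑ i, (u i)⁻ ^ 2 = ∑ i, u i ^ 2 * (if u i < 0 then (1 : ℝ) else 0) := by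
  refine sum_congr rfl fun i _ => ?_
  by_cases h : u i < 0 <;> simp [negPart_eq_ite_lt, h]

lemma neg_sqrt_sum_negPart_sq_le_sum_mul {u s : ι → ℝ} (hs0 : ∀ i, 0 ≤ s i)
    (hs1 : ∑ i, s i ^ 2 = 1) : -√(∑ i, (u i)⁻ ^ 2) ≤ ∑ i, u i * s i := by
  have hCS := Real.sum_mul_le_sqrt_mul_sqrt univ (fun i => (u i)⁻) s
  rw [hs1, Real.sqrt_one, mul_one] at hCS
  calc -√(∑ i, (u i)⁻ ^ 2) ≤ ∑ i, -(u i)⁻ * s i := by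
        simpa only [neg_mul, sum_neg_distrib, neg_le_neg_iff] using hCS
    _ ≤ ∑ i, u i * s i := sum_le_sum fun i _ =>
        mul_le_mul_of_nonneg_right (neg_le.mp (neg_le_negPart (u i))) (hs0 i)

lemma half_le_add_two_mul_add_one {T x : ℝ} (hT : 0 ≤ T) (hx : -√(T / 2) ≤ x) :
    T / 2 ≤ T + 2 * x + 1 := by
  have hsq : √(T / 2) ^ 2 = T / 2 := Real.sq_sqrt (by positivity)
  nlinarith [sq_nonneg (√(T / 2) - 1)]

lemma half_sum_sq_le_sum_add_sq {u s : ι → ℝ} (hs0 : ∀ i, 0 ≤ s i) (hs1 : ∑ i, s i ^ 2 = 1)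
    (hsign : ∑ i, u i ^ 2 * (if u i < 0 then (1 : ℝ) else 0) ≤
      ∑ i, u i ^ 2 * (if 0 < u i then (1 : ℝ) else 0)) :
    (1 / 2 : ℝ) * ∑ i, u i ^ 2 ≤ ∑ i, (u i + s i) ^ 2 := by
  have hneg : ∑ i, (u i)⁻ ^ 2 ≤ (∑ i, u i ^ 2) / 2 := by
    rw [sum_negPart_sq, ← sum_sq_mul_ite_neg_add_sum_sq_mul_ite_pos u]
    linarith
  have hexpand : ∑ i, (u i + s i) ^ 2 = ∑ i, u i ^ 2 + 2 * ∑ i, u i * s i + 1 := by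
    simp only [add_sq, sum_add_distrib, hs1, mul_sum, mul_assoc]
  rw [hexpand, one_div_mul_eq_div]
  refine half_le_add_two_mul_add_one (sum_nonneg fun i _ => sq_nonneg _) ?_
  exact (neg_le_neg (Real.sqrt_le_sqrt hneg)).trans (neg_sqrt_sum_negPart_sq_le_sum_mul hs0 hs1)

theorem stmt_15 (n : ℕ) (u r : Fin n → ℝ) (ρ : ℝ) (hρpos : 0 < ρ)
    (hr0 : ∀ i, 0 ≤ r i)
    (hρ : Real.sqrt (∑ i, (r i) ^ 2) = ρ)
    (hsign : ∑ i, (u i) ^ 2 * (if u i < 0 then (1 : ℝ) else 0) ≤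
      ∑ i, (u i) ^ 2 * (if 0 < u i then (1 : ℝ) else 0)) :
    (1 / 2 : ℝ) * ∑ i, (u i) ^ 2 ≤ ∑ i, (u i + r i / ρ) ^ 2 := by
  have hr2 : ∑ i, r i ^ 2 = ρ ^ 2 := by
    rw [← hρ, Real.sq_sqrt (sum_nonneg fun i _ => sq_nonneg _)]
  refine half_sum_sq_le_sum_add_sq (fun i => div_nonneg (hr0 i) hρpos.le) ?_ hsign
  simp only [div_pow, ← sum_div, hr2]
  exact div_self (pow_ne_zero 2 hρpos.ne')
end
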